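/- Fix u, v ∈ [0,1], 0 ≤ t₀ < 𝒯, and let T : [0,𝒯] → ℝ be a non-decreasing function with T(t₀) > 0. Let (Tₙ)ₙ be a sequence of non-decreasing functions Tₙ : [0,𝒯] → [0,∞) such that sup_{r ∈ [0,𝒯]} |Tₙ(r) − T(r)| → 0 as n → ∞. Then sup over (s,t) ∈ [t₀,𝒯]² of |ψ(Tₙ(s),Tₙ(t);u,v) − ψ(T(s),T(t);u,v)| → 0 as n → ∞. -/

import Mathlib

open MeasureTheory Set Filter

/-- Density of the standard normal distribution (φ). -/
noncomputable def stdNormalPDF (x : ℝ) : ℝ := (Real.sqrt (2 * Real.pi))⁻¹ * Real.exp (-x ^ 2 / 2)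

/-- Cumulative distribution function of the standard normal distribution (Φ). -/
noncomputable def stdNormalCDF (x : ℝ) : ℝ := ∫ t in Set.Iic x, stdNormalPDF t

/-- The standard normal quantile function (Φ⁻¹), the inverse of Φ on (0,1). -/
noncomputable def stdNormalCDFInv : ℝ → ℝ := Function.invFun stdNormalCDF

/-- The integrand of the Brownian-copula kernel; the `if` branches encode the
conventions Φ⁻¹(0) = -∞ (so Φ(·) = 0) and Φ⁻¹(1) = +∞ (so Φ(·) = 1). -/
noncomputable def psiIntegrand (s t v w : ℝ) : ℝ :=
  if v ≤ 0 then 0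
  else if 1 ≤ v then 1
  else stdNormalCDF ((Real.sqrt (max s t) * stdNormalCDFInv v -
      Real.sqrt (min s t) * stdNormalCDFInv w) / Real.sqrt |t - s|)

/-- The Brownian-copula kernel ψ(s,t;u,v). -/
noncomputable def psi (s t u v : ℝ) : ℝ :=
  if 0 < |t - s| then ∫ w in (0:ℝ)..u, psiIntegrand s t v w
  else if 0 < t then min u v
  else u * v

/-! For `u, v ∈ [0,1]`, `(s,t) ↦ ψ(s,t;u,v)` is continuous on `(0,∞)²`. Off the diagonal this is
dominated convergence. At a diagonal point `(a,a)` with `0 < v < 1`, the argument of `Φ` is a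
quantity tending to `√a (Φ⁻¹(v) - Φ⁻¹(w))` divided by `√|t - s| → 0⁺`, so the integrand tends to
`1` for `w < v` and to `0` for `w > v`, and the integral to `min(u,v) = ψ(a,a;u,v)`.
By monotonicity `T` maps `[t₀,𝒯]` into `[T t₀, T 𝒯] ⊆ (0,∞)`; eventually the `Tₙ` map it into a
compact neighbourhood of that interval inside `(0,∞)`, on which `ψ` is uniformly continuous. -/

open Topology ProbabilityTheory

lemma UniformContinuousOn.comp_tendstoUniformlyOn_of_mapsTo {ι α β γ : Type*}
    [UniformSpace β] [UniformSpace γ] {g : β → γ} {K : Set β} {F : ι → α → β} {f : α → β}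
    {p : Filter ι} {s : Set α} (hg : UniformContinuousOn g K) (hF : TendstoUniformlyOn F f p s)
    (hf : MapsTo f s K) (hFK : ∀ᶠ n in p, MapsTo (F n) s K) :
    TendstoUniformlyOn (fun n => g ∘ F n) (g ∘ f) p s := by
  intro U hU
  filter_upwards [hF _ (mem_inf_principal.1 (hg hU)), hFK] with n hn hnK x hx
  exact hn x hx ⟨hf hx, hnK hx⟩

lemma ContinuousOn.comp_tendstoUniformlyOn_of_isCompact {ι α X Y : Type*}
    [PseudoMetricSpace X] [ProperSpace X] [UniformSpace Y] {g : X → Y} {U K : Set X}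
    {F : ι → α → X} {f : α → X} {p : Filter ι} {s : Set α} (hg : ContinuousOn g U)
    (hU : IsOpen U) (hK : IsCompact K) (hKU : K ⊆ U) (hF : TendstoUniformlyOn F f p s)
    (hf : MapsTo f s K) :
    TendstoUniformlyOn (fun n => g ∘ F n) (g ∘ f) p s := by
  obtain ⟨δ, hδ, hδU⟩ := hK.exists_cthickening_subset_open hU hKU
  have hgδ := hK.cthickening.uniformContinuousOn_of_continuous (hg.mono hδU)
  refine hgδ.comp_tendstoUniformlyOn_of_mapsTo hF
    (hf.mono_right (Metric.self_subset_cthickening K)) ?_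
  filter_upwards [Metric.tendstoUniformlyOn_iff.1 hF δ hδ] with n hn x hx
  exact Metric.mem_cthickening_of_dist_le _ _ δ K (hf hx) (dist_comm (f x) _ ▸ (hn x hx).le)

lemma stdNormalPDF_eq_gaussianPDFReal : stdNormalPDF = gaussianPDFReal 0 1 := by
  ext x
  simp [stdNormalPDF, gaussianPDFReal]

lemma integrable_stdNormalPDF : Integrable stdNormalPDF := by
  rw [stdNormalPDF_eq_gaussianPDFReal]
  exact integrable_gaussianPDFReal 0 1

lemma stdNormalCDF_eq_cdf : stdNormalCDF = cdf (gaussianReal 0 1) := by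
  ext x
  rw [cdf_eq_real, measureReal_def, gaussianReal_apply_eq_integral 0 one_ne_zero,
    ENNReal.toReal_ofReal (integral_nonneg (gaussianPDFReal_nonneg 0 1)), stdNormalCDF,
    stdNormalPDF_eq_gaussianPDFReal]

lemma stdNormalCDF_sub (x y : ℝ) :
    stdNormalCDF y - stdNormalCDF x = ∫ t in x..y, stdNormalPDF t :=
  intervalIntegral.integral_Iic_sub_Iic integrable_stdNormalPDF.integrableOn
    integrable_stdNormalPDF.integrableOn

lemma strictMono_stdNormalCDF : StrictMono stdNormalCDF := by
  intro x y hxy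
  have hpdf (t : ℝ) : 0 < stdNormalPDF t :=
    stdNormalPDF_eq_gaussianPDFReal ▸ gaussianPDFReal_pos 0 1 t one_ne_zero
  have hpos : 0 < ∫ t in x..y, stdNormalPDF t :=
    intervalIntegral.intervalIntegral_pos_of_pos integrable_stdNormalPDF.intervalIntegrable hpdf hxy
  linarith [stdNormalCDF_sub x y]

lemma continuous_stdNormalCDF : Continuous stdNormalCDF := by
  have h : stdNormalCDF = fun y => stdNormalCDF 0 + ∫ t in (0:ℝ)..y, stdNormalPDF t := by
    ext y
    linarith [stdNormalCDF_sub 0 y]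
  rw [h]
  exact continuous_const.add <| intervalIntegral.continuous_primitive
    (fun _ _ => integrable_stdNormalPDF.intervalIntegrable) 0

lemma tendsto_stdNormalCDF_atTop : Tendsto stdNormalCDF atTop (𝓝 1) :=
  stdNormalCDF_eq_cdf ▸ tendsto_cdf_atTop _

lemma tendsto_stdNormalCDF_atBot : Tendsto stdNormalCDF atBot (𝓝 0) :=
  stdNormalCDF_eq_cdf ▸ tendsto_cdf_atBot _

lemma stdNormalCDF_mem_Ioo (x : ℝ) : stdNormalCDF x ∈ Ioo (0:ℝ) 1 :=
  ⟨(strictMono_stdNormalCDF.monotone.le_of_tendsto tendsto_stdNormalCDF_atBot (x - 1)).trans_lt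
      (strictMono_stdNormalCDF (sub_one_lt x)),
    (strictMono_stdNormalCDF (lt_add_one x)).trans_le
      (strictMono_stdNormalCDF.monotone.ge_of_tendsto tendsto_stdNormalCDF_atTop (x + 1))⟩

lemma stdNormalCDF_stdNormalCDFInv {v : ℝ} (hv : v ∈ Ioo (0:ℝ) 1) :
    stdNormalCDF (stdNormalCDFInv v) = v := by
  obtain ⟨x₁, hx₁⟩ := ((tendsto_order.1 tendsto_stdNormalCDF_atBot).2 v hv.1).exists
  obtain ⟨x₂, hx₂⟩ := ((tendsto_order.1 tendsto_stdNormalCDF_atTop).1 v hv.2).exists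
  exact Function.invFun_eq
    (intermediate_value_univ x₁ x₂ continuous_stdNormalCDF ⟨hx₁.le, hx₂.le⟩)

lemma stdNormalCDFInv_stdNormalCDF (x : ℝ) : stdNormalCDFInv (stdNormalCDF x) = x :=
  Function.leftInverse_invFun strictMono_stdNormalCDF.injective x

lemma strictMonoOn_stdNormalCDFInv : StrictMonoOn stdNormalCDFInv (Ioo (0:ℝ) 1) := by
  intro a ha b hb hab
  rw [← strictMono_stdNormalCDF.lt_iff_lt, stdNormalCDF_stdNormalCDFInv ha,
    stdNormalCDF_stdNormalCDFInv hb]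
  exact hab

lemma continuousOn_stdNormalCDFInv : ContinuousOn stdNormalCDFInv (Ioo (0:ℝ) 1) := by
  have himage : stdNormalCDFInv '' Ioo (0:ℝ) 1 = univ :=
    eq_univ_of_forall fun x =>
      ⟨stdNormalCDF x, stdNormalCDF_mem_Ioo x, stdNormalCDFInv_stdNormalCDF x⟩
  intro v hv
  refine (strictMonoOn_stdNormalCDFInv.continuousAt_of_image_mem_nhds
    (isOpen_Ioo.mem_nhds hv) ?_).continuousWithinAt
  rw [himage]
  exact univ_mem

lemma psiIntegrand_mem_Icc (s t v w : ℝ) : psiIntegrand s t v w ∈ Icc (0:ℝ) 1 := by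
  unfold psiIntegrand
  split_ifs
  · exact ⟨le_rfl, zero_le_one⟩
  · exact ⟨zero_le_one, le_rfl⟩
  · exact Ioo_subset_Icc_self (stdNormalCDF_mem_Ioo _)

lemma continuousOn_psiIntegrand (s t v : ℝ) :
    ContinuousOn (psiIntegrand s t v) (Ioo (0:ℝ) 1) := by
  unfold psiIntegrand
  split_ifs
  · exact continuousOn_const
  · exact continuousOn_const
  · exact continuous_stdNormalCDF.comp_continuousOn
      ((continuousOn_const.sub (continuousOn_const.mul continuousOn_stdNormalCDFInv)).div_const _)

lemma continuousOn_psiIntegrand_compl_diagonal {v : ℝ} (w : ℝ) :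
    ContinuousOn (fun p : ℝ × ℝ => psiIntegrand p.1 p.2 v w) (diagonal ℝ)ᶜ := by
  unfold psiIntegrand
  split_ifs
  · exact continuousOn_const
  · exact continuousOn_const
  · refine continuous_stdNormalCDF.comp_continuousOn
      (ContinuousOn.div (by fun_prop) (by fun_prop) fun p hp => ?_)
    exact (Real.sqrt_pos.2 (abs_pos.2 (sub_ne_zero.2 (Ne.symm hp)))).ne'

lemma tendsto_integral_psiIntegrand {l : Filter (ℝ × ℝ)} [l.IsCountablyGenerated] {u v : ℝ}
    (hu : u ∈ Icc (0:ℝ) 1) {g : ℝ → ℝ}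
    (hg : ∀ᵐ w, w ∈ Ioo (0:ℝ) 1 →
      Tendsto (fun p : ℝ × ℝ => psiIntegrand p.1 p.2 v w) l (𝓝 (g w))) :
    Tendsto (fun p : ℝ × ℝ => ∫ w in (0:ℝ)..u, psiIntegrand p.1 p.2 v w) l
      (𝓝 (∫ w in (0:ℝ)..u, g w)) := by
  have hsub : Ioo 0 u ⊆ Ioo (0:ℝ) 1 := Ioo_subset_Ioo_right hu.2
  refine intervalIntegral.tendsto_integral_filter_of_dominated_convergence (fun _ => 1)
    (Eventually.of_forall fun p => ?_) (Eventually.of_forall fun p => ae_of_all _ fun w _ => ?_)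
    intervalIntegrable_const ?_
  · rw [uIoc_of_le hu.1, ← Measure.restrict_congr_set Ioo_ae_eq_Ioc]
    exact ((continuousOn_psiIntegrand _ _ _).mono hsub).aestronglyMeasurable measurableSet_Ioo
  · have h := psiIntegrand_mem_Icc p.1 p.2 v w
    rw [Real.norm_eq_abs, abs_of_nonneg h.1]
    exact h.2
  · filter_upwards [hg, Measure.ae_ne volume u] with w hw hwu hmem
    rw [uIoc_of_le hu.1] at hmem
    exact hw (hsub ⟨hmem.1, lt_of_le_of_ne hmem.2 hwu⟩)

lemma integral_indicator_Iic_one {u v : ℝ} (hu : 0 ≤ u) (hv : 0 ≤ v) :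
    ∫ w in (0:ℝ)..u, (Iic v).indicator 1 w = min u v := by
  rw [intervalIntegral.integral_of_le hu, setIntegral_indicator measurableSet_Iic, Ioc_inter_Iic]
  simp [Real.volume_real_Ioc_of_le (le_min hu hv)]

lemma psi_zero_right {u : ℝ} (hu : 0 ≤ u) (s t : ℝ) : psi s t u 0 = 0 := by
  simp [psi, psiIntegrand, hu]

lemma psi_one_right {u : ℝ} (hu : u ≤ 1) (s t : ℝ) : psi s t u 1 = u := by
  simp [psi, psiIntegrand, hu]

lemma psi_of_ne {s t : ℝ} (h : s ≠ t) (u v : ℝ) :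
    psi s t u v = ∫ w in (0:ℝ)..u, psiIntegrand s t v w :=
  if_pos (abs_pos.2 (sub_ne_zero.2 h.symm))

lemma psi_self {t : ℝ} (ht : 0 < t) (u v : ℝ) : psi t t u v = min u v := by
  simp [psi, ht]

lemma continuousAt_psi_of_ne {u v : ℝ} (hu : u ∈ Icc (0:ℝ) 1) {p₀ : ℝ × ℝ}
    (hp₀ : p₀.1 ≠ p₀.2) : ContinuousAt (fun p : ℝ × ℝ => psi p.1 p.2 u v) p₀ := by
  have hopen : IsOpen (diagonal ℝ)ᶜ := isClosed_diagonal.isOpen_compl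
  have hlim := tendsto_integral_psiIntegrand (l := 𝓝 p₀) (v := v) hu (ae_of_all _ fun w _ =>
    (continuousOn_psiIntegrand_compl_diagonal w).continuousAt (hopen.mem_nhds hp₀))
  rw [← psi_of_ne hp₀] at hlim
  refine hlim.congr' ?_
  filter_upwards [hopen.mem_nhds hp₀] with p hp
  exact (psi_of_ne hp u v).symm

lemma tendsto_psiIntegrand_nhdsWithin_compl_diagonal {a v w : ℝ} (ha : 0 < a)
    (hv : v ∈ Ioo (0:ℝ) 1) (hw : w ∈ Ioo (0:ℝ) 1) (hwv : w ≠ v) :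
    Tendsto (fun p : ℝ × ℝ => psiIntegrand p.1 p.2 v w) (𝓝[(diagonal ℝ)ᶜ] (a, a))
      (𝓝 ((Iic v).indicator 1 w)) := by
  simp only [psiIntegrand, not_le.2 hv.1, not_le.2 hv.2, if_false, div_eq_mul_inv]
  set A := stdNormalCDFInv v
  set B := stdNormalCDFInv w
  have hnum : Tendsto (fun p : ℝ × ℝ => √(max p.1 p.2) * A - √(min p.1 p.2) * B)
      (𝓝[(diagonal ℝ)ᶜ] (a, a)) (𝓝 (√a * (A - B))) := by
    have hcont : Continuous fun p : ℝ × ℝ => √(max p.1 p.2) * A - √(min p.1 p.2) * B := by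
      fun_prop
    simpa [mul_sub] using (hcont.tendsto (a, a)).mono_left nhdsWithin_le_nhds
  have hden : Tendsto (fun p : ℝ × ℝ => √|p.2 - p.1|) (𝓝[(diagonal ℝ)ᶜ] (a, a)) (𝓝[>] 0) := by
    refine tendsto_nhdsWithin_iff.2 ⟨?_, eventually_nhdsWithin_of_forall fun p hp => ?_⟩
    · have hcont : Continuous fun p : ℝ × ℝ => √|p.2 - p.1| := by fun_prop
      simpa using (hcont.tendsto (a, a)).mono_left nhdsWithin_le_nhds
    · exact Real.sqrt_pos.2 (abs_pos.2 (sub_ne_zero.2 (Ne.symm hp)))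
  have hinv := tendsto_inv_nhdsGT_zero.comp hden
  rcases hwv.lt_or_gt with hlt | hgt
  · have hpos : 0 < √a * (A - B) :=
      mul_pos (Real.sqrt_pos.2 ha) (sub_pos.2 (strictMonoOn_stdNormalCDFInv hw hv hlt))
    rw [indicator_of_mem (mem_Iic.2 hlt.le)]
    exact tendsto_stdNormalCDF_atTop.comp (hnum.pos_mul_atTop hpos hinv)
  · have hneg : √a * (A - B) < 0 := mul_neg_of_pos_of_neg (Real.sqrt_pos.2 ha)
      (sub_neg.2 (strictMonoOn_stdNormalCDFInv hv hw hgt))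
    rw [indicator_of_notMem (show w ∉ Iic v from not_le.2 hgt)]
    exact tendsto_stdNormalCDF_atBot.comp (hnum.neg_mul_atTop hneg hinv)

lemma continuousWithinAt_psi_compl_diagonal {u v a : ℝ} (hu : u ∈ Icc (0:ℝ) 1)
    (hv : v ∈ Ioo (0:ℝ) 1) (ha : 0 < a) :
    ContinuousWithinAt (fun p : ℝ × ℝ => psi p.1 p.2 u v) (diagonal ℝ)ᶜ (a, a) := by
  show Tendsto _ _ (𝓝 (psi a a u v))
  rw [psi_self ha, ← integral_indicator_Iic_one hu.1 hv.1.le]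
  refine (tendsto_integral_psiIntegrand (v := v) hu ?_).congr' ?_
  · filter_upwards [Measure.ae_ne volume v] with w hwv hw
    exact tendsto_psiIntegrand_nhdsWithin_compl_diagonal ha hv hw hwv
  · filter_upwards [self_mem_nhdsWithin] with p hp
    exact (psi_of_ne hp u v).symm

lemma continuousWithinAt_psi_diagonal {u v a : ℝ} (ha : 0 < a) :
    ContinuousWithinAt (fun p : ℝ × ℝ => psi p.1 p.2 u v) (diagonal ℝ) (a, a) := by
  show Tendsto _ _ (𝓝 (psi a a u v))
  rw [psi_self ha]
  refine tendsto_const_nhds.congr' ?_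
  filter_upwards [self_mem_nhdsWithin,
    nhdsWithin_le_nhds (continuous_snd.continuousAt.eventually (lt_mem_nhds ha))] with p hp hp₂
  rw [mem_diagonal_iff.1 hp, psi_self hp₂]

lemma continuousAt_psi_diagonal {u v a : ℝ} (hu : u ∈ Icc (0:ℝ) 1) (hv : v ∈ Ioo (0:ℝ) 1)
    (ha : 0 < a) : ContinuousAt (fun p : ℝ × ℝ => psi p.1 p.2 u v) (a, a) := by
  rw [← continuousWithinAt_univ, ← union_compl_self (diagonal ℝ), continuousWithinAt_union]
  exact ⟨continuousWithinAt_psi_diagonal ha, continuousWithinAt_psi_compl_diagonal hu hv ha⟩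

lemma continuousOn_psi {u v : ℝ} (hu : u ∈ Icc (0:ℝ) 1) (hv : v ∈ Icc (0:ℝ) 1) :
    ContinuousOn (fun p : ℝ × ℝ => psi p.1 p.2 u v) (Ioi 0 ×ˢ Ioi 0) := by
  rcases hv.1.eq_or_lt with rfl | hv₀
  · simp_rw [psi_zero_right hu.1]
    exact continuousOn_const
  rcases hv.2.eq_or_lt with rfl | hv₁
  · simp_rw [psi_one_right hu.2]
    exact continuousOn_const
  intro p hp
  refine ContinuousAt.continuousWithinAt ?_
  by_cases hdiag : p.1 = p.2
  · obtain ⟨a, rfl⟩ : ∃ a, p = (a, a) := ⟨p.1, Prod.ext rfl hdiag.symm⟩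
    exact continuousAt_psi_diagonal hu ⟨hv₀, hv₁⟩ hp.1
  · exact continuousAt_psi_of_ne hu hdiag

theorem psi_uniform_convergence_general (u v t₀ 𝒯 : ℝ)
    (hu : u ∈ Set.Icc (0:ℝ) 1) (hv : v ∈ Set.Icc (0:ℝ) 1)
    (ht₀ : 0 ≤ t₀)
    (T : ℝ → ℝ) (hT : MonotoneOn T (Set.Icc 0 𝒯)) (hTpos : 0 < T t₀)
    (Tn : ℕ → ℝ → ℝ)
    (hconv : TendstoUniformlyOn Tn T Filter.atTop (Set.Icc 0 𝒯)) :
    TendstoUniformlyOn (fun n (p : ℝ × ℝ) => psi (Tn n p.1) (Tn n p.2) u v)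
      (fun p : ℝ × ℝ => psi (T p.1) (T p.2) u v) Filter.atTop
      (Set.Icc t₀ 𝒯 ×ˢ Set.Icc t₀ 𝒯) := by
  have hconv' := hconv.mono (Icc_subset_Icc_left ht₀)
  have hpair : TendstoUniformlyOn (fun n => Prod.map (Tn n) (Tn n)) (Prod.map T T) atTop
      (Icc t₀ 𝒯 ×ˢ Icc t₀ 𝒯) :=
    fun U hU => ((hconv'.prodMap hconv') U hU).diag_of_prod
  have hrange : MapsTo T (Icc t₀ 𝒯) (Icc (T t₀) (T 𝒯)) := fun r hr =>
    ⟨hT ⟨ht₀, hr.1.trans hr.2⟩ ⟨ht₀.trans hr.1, hr.2⟩ hr.1,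
      hT ⟨ht₀.trans hr.1, hr.2⟩ ⟨ht₀.trans (hr.1.trans hr.2), le_rfl⟩ hr.2⟩
  have hpos : Icc (T t₀) (T 𝒯) ⊆ Ioi 0 := fun x hx => hTpos.trans_le hx.1
  exact (continuousOn_psi hu hv).comp_tendstoUniformlyOn_of_isCompact
    (isOpen_Ioi.prod isOpen_Ioi) (isCompact_Icc.prod isCompact_Icc) (prod_mono hpos hpos) hpair
    (hrange.prodMap hrange)

/-- If Tₙ → T uniformly on [0,𝒯], where T is non-decreasing with T(t₀) > 0 and the Tₙ are
non-decreasing and non-negative, then ψ(Tₙ(s),Tₙ(t);u,v) → ψ(T(s),T(t);u,v) uniformly over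
(s,t) ∈ [t₀,𝒯]². -/
theorem psi_uniform_convergence (u v t₀ 𝒯 : ℝ)
    (hu : u ∈ Set.Icc (0:ℝ) 1) (hv : v ∈ Set.Icc (0:ℝ) 1)
    (ht₀ : 0 ≤ t₀) (ht₀𝒯 : t₀ < 𝒯)
    (T : ℝ → ℝ) (hT : MonotoneOn T (Set.Icc 0 𝒯)) (hTpos : 0 < T t₀)
    (Tn : ℕ → ℝ → ℝ) (hTn : ∀ n, MonotoneOn (Tn n) (Set.Icc 0 𝒯))
    (hTnn : ∀ n, ∀ r ∈ Set.Icc (0:ℝ) 𝒯, 0 ≤ Tn n r)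
    (hconv : TendstoUniformlyOn Tn T Filter.atTop (Set.Icc 0 𝒯)) :
    TendstoUniformlyOn (fun n (p : ℝ × ℝ) => psi (Tn n p.1) (Tn n p.2) u v)
      (fun p : ℝ × ℝ => psi (T p.1) (T p.2) u v) Filter.atTop
      (Set.Icc t₀ 𝒯 ×ˢ Set.Icc t₀ 𝒯) :=
  psi_uniform_convergence_general u v t₀ 𝒯 hu hv ht₀ T hT hTpos Tn hconv
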